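/- arXiv:2505.12295 — 3 statements merged into one kernel-verified Lean document; each statement's English description precedes it below -/
import Mathlib

section
/- For an m×n bicomplex matrix A = ¹A e₁ + ²A e₂, the idempotent row rank of A equals the idempotent column rank of A, and both equal rank(¹A) + rank(²A) (the modified rank of A). -/
noncomputable section
open Complex Matrix

/-- The bicomplex numbers, modeled via their idempotent-component representation
as `ℂ × ℂ` with componentwise ring operations (a commutative `ℂ`-algebra). -/
abbrev BC : Type := ℂ × ℂ

/-- The first imaginary unit `i₁` (the image of `i ∈ ℂ₁` under the embedding `ℂ₁ → ℂ₂`). -/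
def bi1 : BC := (I, I)

/-- The second imaginary unit `i₂`, commuting with `i₁` and satisfying `i₂² = -1`. -/
def bi2 : BC := (I, -I)

/-- The idempotent `e₁ = (1 + i₁i₂)/2`. -/
def be1 : BC := (2 : ℂ)⁻¹ • (1 + bi1 * bi2)

/-- The idempotent `e₂ = (1 - i₁i₂)/2`. -/
def be2 : BC := (2 : ℂ)⁻¹ • (1 - bi1 * bi2)

/-- The embedding of `ℂ₁` into the bicomplex numbers (sending `i` to `i₁`). -/
def toBC (z : ℂ) : BC := algebraMap ℂ BC z

/-- Componentwise embedding of a complex vector into `ℂ₂^m`, multiplied by `e`. -/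
def mulE (e : BC) (m : ℕ) : (Fin m → ℂ) →ₗ[ℂ] (Fin m → BC) :=
  LinearMap.pi fun i =>
    (LinearMap.mulRight ℂ e).comp ((Algebra.linearMap ℂ BC).comp (LinearMap.proj i))

/-- The column space of a complex matrix: the `ℂ`-span of its columns. -/
def colSpace {m n : ℕ} (M : Matrix (Fin m) (Fin n) ℂ) : Submodule ℂ (Fin m → ℂ) :=
  Submodule.span ℂ (Set.range fun j i => M i j)

/-- The row space of a complex matrix: the `ℂ`-span of its rows. -/
def rowSpace {m n : ℕ} (M : Matrix (Fin m) (Fin n) ℂ) : Submodule ℂ (Fin n → ℂ) :=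
  Submodule.span ℂ (Set.range fun i j => M i j)

/-- The column space of a bicomplex matrix: the `ℂ₁`-span of its columns in `ℂ₂^m(ℂ₁)`. -/
def colSpaceBC {m n : ℕ} (A : Matrix (Fin m) (Fin n) BC) : Submodule ℂ (Fin m → BC) :=
  Submodule.span ℂ (Set.range fun j i => A i j)

/-- The idempotent column space `(col space of ¹A)e₁ + (col space of ²A)e₂`. -/
def icolSpace {m n : ℕ} (A1 A2 : Matrix (Fin m) (Fin n) ℂ) : Submodule ℂ (Fin m → BC) :=
  (colSpace A1).map (mulE be1 m) ⊔ (colSpace A2).map (mulE be2 m)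

/-- The idempotent row space `(row space of ¹A)e₁ + (row space of ²A)e₂`. -/
def irowSpace {m n : ℕ} (A1 A2 : Matrix (Fin m) (Fin n) ℂ) : Submodule ℂ (Fin n → BC) :=
  (rowSpace A1).map (mulE be1 n) ⊔ (rowSpace A2).map (mulE be2 n)

/-- The augmented matrix `(M | b)`. -/
def aug {m n : ℕ} (M : Matrix (Fin m) (Fin n) ℂ) (b : Fin m → ℂ) :
    Matrix (Fin m) (Fin (n + 1)) ℂ :=
  Matrix.of fun i j => if h : (j : ℕ) < n then M i ⟨j, h⟩ else b i


lemma be1_eq : be1 = ((0 : ℂ), (1 : ℂ)) := by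
  unfold be1 bi1 bi2
  ext <;> simp [Prod.fst_mul, Prod.snd_mul, Complex.I_mul_I] <;> ring

lemma be2_eq : be2 = ((1 : ℂ), (0 : ℂ)) := by
  unfold be2 bi1 bi2
  ext <;> simp [Prod.fst_mul, Prod.snd_mul, Complex.I_mul_I] <;> ring

lemma mulE_be1_apply {k : ℕ} (v : Fin k → ℂ) (i : Fin k) :
    mulE be1 k v i = ((0 : ℂ), v i) := by
  simp [mulE, be1_eq, Prod.ext_iff, Prod.fst_mul, Prod.snd_mul, Prod.algebraMap_apply,
    Prod.mk_mul_mk]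

lemma mulE_be2_apply {k : ℕ} (v : Fin k → ℂ) (i : Fin k) :
    mulE be2 k v i = (v i, (0 : ℂ)) := by
  simp [mulE, be2_eq, Prod.ext_iff, Prod.fst_mul, Prod.snd_mul]

lemma mulE_be1_inj (k : ℕ) : Function.Injective (mulE be1 k) := by
  intro a b h
  funext i
  have := congrFun h i
  rw [mulE_be1_apply, mulE_be1_apply] at this
  exact (Prod.ext_iff.mp this).2

lemma mulE_be2_inj (k : ℕ) : Function.Injective (mulE be2 k) := by
  intro a b h
  funext i
  have := congrFun h i
  rw [mulE_be2_apply, mulE_be2_apply] at this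
  exact (Prod.ext_iff.mp this).1

lemma map_mulE_inf_eq_bot {k : ℕ} (S T : Submodule ℂ (Fin k → ℂ)) :
    S.map (mulE be1 k) ⊓ T.map (mulE be2 k) = ⊥ := by
  rw [eq_bot_iff]
  rintro x ⟨⟨u, -, rfl⟩, w, -, hw⟩
  simp only [Submodule.mem_bot]
  funext i
  have := congrFun hw i
  rw [mulE_be2_apply, mulE_be1_apply] at this
  have h2 : u i = 0 := by
    have := (Prod.ext_iff.mp this).2
    simp at this; exact this.symm
  rw [mulE_be1_apply]
  simp [h2]

lemma finrank_map_mulE {k : ℕ} (e : BC) (he : Function.Injective (mulE e k))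
    (S : Submodule ℂ (Fin k → ℂ)) :
    Module.finrank ℂ (S.map (mulE e k)) = Module.finrank ℂ S :=
  (Submodule.equivMapOfInjective _ he S).finrank_eq.symm

lemma finrank_colSpace {p q : ℕ} (M : Matrix (Fin p) (Fin q) ℂ) :
    Module.finrank ℂ (colSpace M) = M.rank := by
  rw [Matrix.rank_eq_finrank_span_cols]
  rfl

lemma finrank_rowSpace {p q : ℕ} (M : Matrix (Fin p) (Fin q) ℂ) :
    Module.finrank ℂ (rowSpace M) = M.rank := by
  have : rowSpace M = colSpace Mᵀ := rfl
  rw [this, finrank_colSpace, Matrix.rank_transpose]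

lemma finrank_sup_mulE {k : ℕ} (S T : Submodule ℂ (Fin k → ℂ)) :
    Module.finrank ℂ ↥(S.map (mulE be1 k) ⊔ T.map (mulE be2 k)) =
      Module.finrank ℂ S + Module.finrank ℂ T := by
  have h := Submodule.finrank_sup_add_finrank_inf_eq (S.map (mulE be1 k)) (T.map (mulE be2 k))
  rw [map_mulE_inf_eq_bot, finrank_bot ℂ (Fin k → BC)] at h
  simpa [finrank_map_mulE _ (mulE_be1_inj k), finrank_map_mulE _ (mulE_be2_inj k)] using h

/-- The idempotent row rank equals the idempotent column rank, and both equal the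
modified rank `rank(¹A) + rank(²A)`. -/
theorem irowRank_eq_icolRank {m n : ℕ} (A : Matrix (Fin m) (Fin n) BC) (A1 A2 : Matrix (Fin m) (Fin n) ℂ)
    (hA : ∀ i j, A i j = toBC (A1 i j) * be1 + toBC (A2 i j) * be2) :
    Module.finrank ℂ (irowSpace A1 A2) = Module.finrank ℂ (icolSpace A1 A2) ∧
      Module.finrank ℂ (icolSpace A1 A2) = A1.rank + A2.rank := by
  have hc : Module.finrank ℂ (icolSpace A1 A2) = A1.rank + A2.rank := by
    rw [icolSpace, finrank_sup_mulE, finrank_colSpace, finrank_colSpace]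
  have hr : Module.finrank ℂ (irowSpace A1 A2) = A1.rank + A2.rank := by
    rw [irowSpace, finrank_sup_mulE, finrank_rowSpace, finrank_rowSpace]
  exact ⟨hr.trans hc.symm, hc⟩

end
end

section
/- The rank of the linear map T = T₁e₁ + T₂e₂ (dimension over ℂ₁ of its range) equals rank(T₁) + rank(T₂), i.e. the modified rank of its idempotent matrix representation. -/
noncomputable section
open Complex Matrix

lemma toBC_eq (z : ℂ) : toBC z = (z, z) := rfl

/-- Componentwise splitting of `Fin k → ℂ × ℂ`. -/
def split (k : ℕ) : (Fin k → BC) ≃ₗ[ℂ] (Fin k → ℂ) × (Fin k → ℂ) where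
  toFun v := (fun i => (v i).1, fun i => (v i).2)
  invFun p := fun i => (p.1 i, p.2 i)
  map_add' _ _ := rfl
  map_smul' _ _ := rfl
  left_inv _ := rfl
  right_inv _ := rfl

/-- A product of submodules is equivalent to the product of the submodules. -/
def prodE {A B : Type*} [AddCommGroup A] [AddCommGroup B] [Module ℂ A] [Module ℂ B]
    (p : Submodule ℂ A) (q : Submodule ℂ B) : (p.prod q) ≃ₗ[ℂ] p × q where
  toFun x := (⟨x.1.1, x.2.1⟩, ⟨x.1.2, x.2.2⟩)
  invFun y := ⟨(y.1.1, y.2.1), y.1.2, y.2.2⟩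
  map_add' _ _ := rfl
  map_smul' _ _ := rfl
  left_inv _ := rfl
  right_inv _ := rfl

lemma range_prodMap' {A B C D : Type*} [AddCommGroup A] [AddCommGroup B] [AddCommGroup C]
    [AddCommGroup D] [Module ℂ A] [Module ℂ B] [Module ℂ C] [Module ℂ D]
    (f : A →ₗ[ℂ] B) (g : C →ₗ[ℂ] D) :
    LinearMap.range (f.prodMap g) = (LinearMap.range f).prod (LinearMap.range g) := by
  ext x
  simp only [LinearMap.mem_range, Submodule.mem_prod, Prod.ext_iff]
  constructor
  · rintro ⟨y, h1, h2⟩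
    exact ⟨⟨y.1, h1⟩, ⟨y.2, h2⟩⟩
  · rintro ⟨⟨a, ha⟩, ⟨b, hb⟩⟩
    exact ⟨(a, b), ha, hb⟩

/-- The rank of `T = T₁e₁ + T₂e₂` equals `rank(T₁) + rank(T₂)`, the modified rank of its
idempotent matrix representation. -/
theorem rank_T_eq {m n : ℕ} (T1 T2 : (Fin n → ℂ) →ₗ[ℂ] (Fin m → ℂ))
    (T : (Fin n → BC) →ₗ[ℂ] (Fin m → BC))
    (hT : ∀ x1 x2 : Fin n → ℂ,
      T (fun j => toBC (x1 j) * be1 + toBC (x2 j) * be2) =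
        fun i => toBC (T1 x1 i) * be1 + toBC (T2 x2 i) * be2) :
    Module.finrank ℂ (LinearMap.range T) =
        Module.finrank ℂ (LinearMap.range T1) + Module.finrank ℂ (LinearMap.range T2) ∧
      Module.finrank ℂ (LinearMap.range T) =
        (LinearMap.toMatrix' T1).rank + (LinearMap.toMatrix' T2).rank := by
  have key : T = ((split m).symm.toLinearMap.comp ((T2.prodMap T1).comp (split n).toLinearMap)) := by
    apply LinearMap.ext
    intro v
    have h := hT (fun j => (v j).2) (fun j => (v j).1)
    have hv : (fun j => toBC ((v j).2) * be1 + toBC ((v j).1) * be2) = v := by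
      funext j
      simp [toBC_eq, be1_eq, be2_eq, Prod.ext_iff, Prod.mk_mul_mk]
    rw [hv] at h
    rw [h]
    funext i
    simp [split, LinearMap.prodMap_apply, toBC_eq, be1_eq, be2_eq, Prod.ext_iff, Prod.mk_mul_mk]
  have hrange : LinearMap.range T =
      ((LinearMap.range T2).prod (LinearMap.range T1)).map (split m).symm.toLinearMap := by
    rw [key, LinearMap.range_comp, LinearMap.range_comp_of_range_eq_top _ (LinearEquiv.range _),
      range_prodMap']
  have h1 : Module.finrank ℂ (LinearMap.range T) =
      Module.finrank ℂ (LinearMap.range T1) + Module.finrank ℂ (LinearMap.range T2) := by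
    rw [hrange, LinearEquiv.finrank_map_eq,
      LinearEquiv.finrank_eq (prodE (LinearMap.range T2) (LinearMap.range T1)),
      Module.finrank_prod, add_comm]
  refine ⟨h1, ?_⟩
  rw [h1]
  have e1 : (LinearMap.toMatrix' T1).rank = Module.finrank ℂ (LinearMap.range T1) := by
    rw [Matrix.rank, ← Matrix.toLin'_apply', Matrix.toLin'_toMatrix']
  have e2 : (LinearMap.toMatrix' T2).rank = Module.finrank ℂ (LinearMap.range T2) := by
    rw [Matrix.rank, ← Matrix.toLin'_apply', Matrix.toLin'_toMatrix']
  rw [e1, e2]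


end
end

section
/- If A ∈ ℂ₂^{m×n} with m < n and ρ_mr(A) = 2m, then for every B ∈ ℂ₂^m the system AX = B has infinitely many solutions in ℂ₂ⁿ. -/
noncomputable section
open Complex Matrix

/-- If `m < n` and `ρ_mr(A) = 2m`, then for every `B` the system `AX = B` has infinitely
many solutions. -/
theorem wide_full_rank_infinite_solutions {m n : ℕ} (A : Matrix (Fin m) (Fin n) BC) (A1 A2 : Matrix (Fin m) (Fin n) ℂ)
    (hA : ∀ i j, A i j = toBC (A1 i j) * be1 + toBC (A2 i j) * be2)
    (hmn : m < n) (hrank : A1.rank + A2.rank = 2 * m) :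
    ∀ B : Fin m → BC, {X : Fin n → BC | A.mulVec X = B}.Infinite := by
  have hbe1 : be1 = (0, 1) := by simp [be1, bi1, bi2, Prod.ext_iff]; norm_num
  have hbe2 : be2 = (1, 0) := by simp [be2, bi1, bi2, Prod.ext_iff]; norm_num
  have hA' : ∀ i j, A i j = (A2 i j, A1 i j) := by
    intro i j
    rw [hA i j, hbe1, hbe2]
    show (A1 i j, A1 i j) * (0, 1) + (A2 i j, A2 i j) * (1, 0) = _
    simp [Prod.ext_iff]
  have hmul : ∀ X : Fin n → BC, A.mulVec X =
      fun i => (A2.mulVec (fun j => (X j).1) i, A1.mulVec (fun j => (X j).2) i) := by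
    intro X; funext i
    simp only [Matrix.mulVec, dotProduct, hA', Prod.mk_mul_mk]
    rw [Prod.ext_iff, Prod.fst_sum, Prod.snd_sum]
    constructor
    · simp
    · simp
  -- each rank equals m
  have h1 : A1.rank ≤ m := by simpa using A1.rank_le_card_height
  have h2 : A2.rank ≤ m := by simpa using A2.rank_le_card_height
  have hr1 : A1.rank = m := by omega
  have hr2 : A2.rank = m := by omega
  have hsurj : ∀ (M : Matrix (Fin m) (Fin n) ℂ), M.rank = m →
      Function.Surjective M.mulVecLin := by
    intro M hM
    rw [← LinearMap.range_eq_top]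
    apply Submodule.eq_top_of_finrank_eq
    rw [Module.finrank_fintype_fun_eq_card, Fintype.card_fin]
    exact hM
  -- a nonzero kernel element of A2
  have hnotinj : ¬ Function.Injective A2.mulVecLin := by
    intro hinj
    have := LinearMap.finrank_le_finrank_of_injective hinj
    simp [Module.finrank_fintype_fun_eq_card] at this
    omega
  obtain ⟨x, y, hxy, hne⟩ := Function.not_injective_iff.mp hnotinj
  set k : Fin n → ℂ := x - y with hk
  have hk0 : A2.mulVec k = 0 := by
    have : A2.mulVecLin (x - y) = 0 := by rw [map_sub, hxy, sub_self]
    simpa using this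
  have hkne : k ≠ 0 := sub_ne_zero.mpr hne
  obtain ⟨j0, hj0⟩ : ∃ j0, k j0 ≠ 0 := by
    by_contra h; push_neg at h; exact hkne (funext h)
  intro B
  obtain ⟨x2, hx2⟩ := hsurj A2 hr2 (fun i => (B i).1)
  obtain ⟨x1, hx1⟩ := hsurj A1 hr1 (fun i => (B i).2)
  simp only [Matrix.mulVecLin_apply] at hx2 hx1
  set f : ℂ → (Fin n → BC) := fun c j => (x2 j + c * k j, x1 j) with hf
  refine Set.infinite_of_injective_forall_mem (f := f) ?_ ?_
  · intro c c' hcc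
    have := congrFun hcc j0
    simp only [hf, Prod.ext_iff] at this
    have h' : c * k j0 = c' * k j0 := by linear_combination this.1
    exact mul_right_cancel₀ hj0 h'
  · intro c
    simp only [Set.mem_setOf_eq, hmul]
    funext i
    have e1 : (fun j => ((f c j).1)) = x2 + c • k := by funext j; simp [hf, Pi.smul_apply]
    have e2 : (fun j => ((f c j).2)) = x1 := by funext j; simp [hf]
    rw [e1, e2]
    simp [Matrix.mulVec_add, Matrix.mulVec_smul, hk0, hx2, hx1]

end
end
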